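/- Let R be a graded regular Γ-graded ring, n ≥ 1 and γ : Fin n → Γ. Then the graded matrix ring M_n(R)(γ) is graded regular: for every d ∈ Γ and every matrix A homogeneous of degree d with respect to γ, there exists a matrix B homogeneous of degree -d with respect to γ such that A*B*A = A. -/

import Mathlib

/-- An element of `R` is homogeneous with respect to the grading `𝒜` if it lies in some
component `𝒜 γ`. -/
def IsHomogeneousElem {Γ R : Type*} [AddGroup Γ] [Ring R]
    (𝒜 : Γ → AddSubgroup R) (x : R) : Prop :=
  ∃ γ : Γ, x ∈ 𝒜 γ

/-- `R` is graded (von Neumann) regular: every homogeneous `x` admits a homogeneous `y`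
with `x*y*x = x`. -/
def GradedRegular {Γ R : Type*} [AddGroup Γ] [Ring R]
    (𝒜 : Γ → AddSubgroup R) : Prop :=
  ∀ γ : Γ, ∀ x ∈ 𝒜 γ, ∃ y : R, IsHomogeneousElem 𝒜 y ∧ x * y * x = x

/-- A matrix `A` is homogeneous of degree `d` with respect to the shift vector `γ` if
`A i j ∈ 𝒜 (-(γ i) + d + γ j)` for all `i, j`.  These components define the `Γ`-graded
matrix ring `Mₙ(R)(γ)`. -/
def MatrixGradedHomogeneous {Γ R : Type*} [AddGroup Γ] [Ring R]
    (𝒜 : Γ → AddSubgroup R) {n : ℕ} (γ : Fin n → Γ) (d : Γ)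
    (A : Matrix (Fin n) (Fin n) R) : Prop :=
  ∀ i j : Fin n, A i j ∈ 𝒜 (-(γ i) + d + γ j)

set_option linter.unusedSectionVars false


namespace MGRaux
variable {Γ R : Type*} [AddGroup Γ] [DecidableEq Γ] [Ring R]
  (𝒜 : Γ → AddSubgroup R) [GradedRing 𝒜]

/-- Refined regularity: the quasi-inverse can be chosen of degree `-δ`. -/
lemma reg' (hreg : ∀ γ : Γ, ∀ x ∈ 𝒜 γ, ∃ y : R, (∃ μ, y ∈ 𝒜 μ) ∧ x * y * x = x)
    {δ : Γ} {x : R} (hx : x ∈ 𝒜 δ) :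
    ∃ y ∈ 𝒜 (-δ), x * y * x = x := by
  obtain ⟨y, ⟨μ, hy⟩, hxyx⟩ := hreg δ x hx
  by_cases h0 : x = 0
  · exact ⟨0, (𝒜 (-δ)).zero_mem, by simp [h0]⟩
  have hmem : x ∈ 𝒜 (δ + μ + δ) := by
    rw [← hxyx]
    exact SetLike.mul_mem_graded (SetLike.mul_mem_graded hx hy) hx
  have heq : δ + μ + δ = δ := by
    by_contra hne
    have h1 : (DirectSum.decompose 𝒜 x δ : R) = 0 := by
      rw [DirectSum.decompose_of_mem_ne 𝒜 hmem hne]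
    rw [DirectSum.decompose_of_mem_same 𝒜 hx] at h1
    exact h0 h1
  have hμ : μ = -δ := by
    have heq' : δ + μ + δ = 0 + δ := by rw [heq, zero_add]
    have h2 : δ + μ = 0 := add_right_cancel heq'
    exact (neg_eq_of_add_eq_zero_right h2).symm
  exact ⟨y, hμ ▸ hy, hxyx⟩

end MGRaux

namespace MGRaux
variable {Γ R : Type*} [AddGroup Γ] [DecidableEq Γ] [Ring R]
  (𝒜 : Γ → AddSubgroup R) [GradedRing 𝒜]

lemma colLemma (hreg : ∀ γ : Γ, ∀ x ∈ 𝒜 γ, ∃ y : R, (∃ μ, y ∈ 𝒜 μ) ∧ x * y * x = x) :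
    ∀ (n : ℕ) (γ : Fin n → Γ) (d : Γ) (v : Fin n → R),
      (∀ i, v i ∈ 𝒜 (-(γ i) + d)) →
      ∃ w : Fin n → R, (∀ j, w j ∈ 𝒜 (-d + γ j)) ∧
        ∀ i, v i * (∑ k, w k * v k) = v i := by
  intro n
  induction n with
  | zero => exact fun γ d v _ => ⟨fun i => i.elim0, fun i => i.elim0, fun i => i.elim0⟩
  | succ n ih =>
    intro γ d v hv
    set a := v 0 with ha
    obtain ⟨y, hy, haya⟩ := reg' 𝒜 hreg (hv 0)
    have hy' : y ∈ 𝒜 (-d + γ 0) := by rwa [neg_add_rev, neg_neg] at hy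
    set e := y * a with he
    have hemem : e ∈ 𝒜 0 := by
      have := SetLike.mul_mem_graded hy' (hv 0)
      have hdeg : -d + γ 0 + (-(γ 0) + d) = 0 := by simp [add_assoc]
      rwa [hdeg] at this
    have h1e : (1 : R) - e ∈ 𝒜 0 := (𝒜 0).sub_mem (SetLike.one_mem_graded 𝒜) hemem
    -- the truncated tail column
    set u : Fin n → R := fun k => v k.succ * (1 - e) with hu
    have humem : ∀ k, u k ∈ 𝒜 (-(γ k.succ) + d) := by
      intro k
      have := SetLike.mul_mem_graded (hv k.succ) h1e
      rwa [add_zero] at this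
    obtain ⟨q, hq, hqu⟩ := ih (fun k => γ k.succ) d u humem
    set t := ∑ k, q k * u k with ht
    -- the quasi-inverse row
    set p : R := y - (∑ k, (1 - e) * q k * v k.succ) * y with hp
    have hpmem : p ∈ 𝒜 (-d + γ 0) := by
      refine (𝒜 _).sub_mem hy' ?_
      have hsum0 : (∑ k, (1 - e) * q k * v k.succ) ∈ 𝒜 0 := by
        refine (𝒜 0).sum_mem fun k _ => ?_
        have h1 := SetLike.mul_mem_graded (SetLike.mul_mem_graded h1e (hq k)) (hv k.succ)
        have hdeg : 0 + (-d + γ k.succ) + (-(γ k.succ) + d) = 0 := by simp [add_assoc]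
        rwa [hdeg] at h1
      have := SetLike.mul_mem_graded hsum0 hy'
      rwa [zero_add] at this
    set w : Fin (n + 1) → R := Fin.cons p (fun k => (1 - e) * q k) with hw
    refine ⟨w, ?_, ?_⟩
    · intro j
      refine Fin.cases ?_ ?_ j
      · simpa [hw] using hpmem
      · intro k
        have := SetLike.mul_mem_graded h1e (hq k)
        rw [zero_add] at this
        simpa [hw] using this
    · -- main identity
      have hsum : (∑ k, w k * v k : R) = e + (1 - e) * t := by
        rw [Fin.sum_univ_succ]
        simp only [hw, Fin.cons_zero, Fin.cons_succ]
        simp only [hp, ht, hu, he, ha, sub_mul, Finset.sum_mul, Finset.mul_sum, mul_sub,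
          mul_one, mul_assoc]
        simp only [one_mul, sub_eq_add_neg, neg_add, neg_neg, Finset.sum_add_distrib,
          Finset.sum_neg_distrib]
        abel
      rw [hsum]
      intro i
      refine Fin.cases ?_ ?_ i
      · have hae : a * e = a := by rw [he, ← mul_assoc, haya]
        have ha1e : a * (1 - e) = 0 := by rw [mul_sub, mul_one, hae, sub_self]
        rw [mul_add, hae, ← mul_assoc, ha1e, zero_mul, add_zero]
      · intro k
        have h2 : v k.succ * (1 - e) * t = v k.succ * (1 - e) := hqu k
        rw [mul_add, ← mul_assoc (v k.succ) (1 - e) t, h2, mul_sub, mul_one,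
          add_sub_cancel]

end MGRaux

namespace MGRaux
variable {Γ R : Type*} [AddGroup Γ] [DecidableEq Γ] [Ring R]
  (𝒜 : Γ → AddSubgroup R) [GradedRing 𝒜]
variable {n : ℕ} {γ : Fin n → Γ}

lemma homMul {d1 d2 : Γ} {A B : Matrix (Fin n) (Fin n) R}
    (hA : MatrixGradedHomogeneous 𝒜 γ d1 A) (hB : MatrixGradedHomogeneous 𝒜 γ d2 B) :
    MatrixGradedHomogeneous 𝒜 γ (d1 + d2) (A * B) := by
  intro i j
  rw [Matrix.mul_apply]
  refine (𝒜 _).sum_mem fun k _ => ?_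
  have h := SetLike.mul_mem_graded (hA i k) (hB k j)
  have hdeg : (-(γ i) + d1 + γ k) + (-(γ k) + d2 + γ j) = -(γ i) + (d1 + d2) + γ j := by
    simp [add_assoc]
  rwa [hdeg] at h

lemma homOne : MatrixGradedHomogeneous 𝒜 γ 0 (1 : Matrix (Fin n) (Fin n) R) := by
  intro i j
  by_cases h : i = j
  · subst h
    rw [Matrix.one_apply_eq]
    have hdeg : -(γ i) + 0 + γ i = 0 := by simp
    rw [hdeg]
    exact SetLike.one_mem_graded 𝒜
  · rw [Matrix.one_apply_ne h]
    exact (𝒜 _).zero_mem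

lemma homSub {d : Γ} {A B : Matrix (Fin n) (Fin n) R}
    (hA : MatrixGradedHomogeneous 𝒜 γ d A) (hB : MatrixGradedHomogeneous 𝒜 γ d B) :
    MatrixGradedHomogeneous 𝒜 γ d (A - B) := fun i j => by
  rw [Matrix.sub_apply]; exact (𝒜 _).sub_mem (hA i j) (hB i j)

lemma homAdd {d : Γ} {A B : Matrix (Fin n) (Fin n) R}
    (hA : MatrixGradedHomogeneous 𝒜 γ d A) (hB : MatrixGradedHomogeneous 𝒜 γ d B) :
    MatrixGradedHomogeneous 𝒜 γ d (A + B) := fun i j => by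
  rw [Matrix.add_apply]; exact (𝒜 _).add_mem (hA i j) (hB i j)

lemma homZero {d : Γ} : MatrixGradedHomogeneous 𝒜 γ d (0 : Matrix (Fin n) (Fin n) R) :=
  fun i j => by rw [Matrix.zero_apply]; exact (𝒜 _).zero_mem

lemma aux_idem {S : Type*} [Ring S] {e f : S} (hee : e * e = e) (hef : e * f = 0)
    (hff : f * f = f) : (e + f * (1 - e)) * (e + f * (1 - e)) = e + f * (1 - e) := by
  have h1 : (1 - e) * e = 0 := by rw [sub_mul, one_mul, hee, sub_self]
  have h2 : (1 - e) * f = f := by rw [sub_mul, one_mul, hef, sub_zero]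
  have expand : (e + f * (1 - e)) * (e + f * (1 - e))
      = e * e + (e * f) * (1 - e) + f * ((1 - e) * e) + f * (((1 - e) * f) * (1 - e)) := by
    noncomm_ring
  rw [expand, hee, hef, h1, h2, zero_mul, mul_zero, add_zero, add_zero, ← mul_assoc, hff]

lemma aux_ax {S : Type*} [Ring S] (a x m' : S) :
    a * (x + (1 - x * a) * m' * (1 - a * x))
      = a * x + ((1 - a * x) * a * m') * (1 - a * x) := by noncomm_ring

lemma aux_ef {S : Type*} [Ring S] {e : S} (a m' : S) (hee : e * e = e) :
    e * (((1 - e) * a) * m') = 0 := by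
  have h : e * (1 - e) = 0 := by rw [mul_sub, mul_one, hee, sub_self]
  rw [← mul_assoc, ← mul_assoc, h, zero_mul, zero_mul]

lemma aux_split {S : Type*} [Ring S] (e f a : S) :
    (e + f * (1 - e)) * a = e * a + f * ((1 - e) * a) := by noncomm_ring

lemma buildE (hreg : ∀ γ : Γ, ∀ x ∈ 𝒜 γ, ∃ y : R, (∃ μ, y ∈ 𝒜 μ) ∧ x * y * x = x)
    {n : ℕ} {γ : Fin n → Γ} {d : Γ} {A : Matrix (Fin n) (Fin n) R}
    (hA : MatrixGradedHomogeneous 𝒜 γ d A) :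
    ∀ m : ℕ, ∃ X : Matrix (Fin n) (Fin n) R,
      MatrixGradedHomogeneous 𝒜 γ (-d) X ∧ (A * X) * (A * X) = A * X ∧
      ∀ j : Fin n, (j : ℕ) < m → ∀ i, ((A * X) * A) i j = A i j := by
  intro m
  induction m with
  | zero =>
    exact ⟨0, homZero 𝒜, by simp, fun j hj => absurd hj (by omega)⟩
  | succ m ihm =>
    obtain ⟨X, hX, hEE, hcol⟩ := ihm
    by_cases hm : m < n
    case neg =>
      refine ⟨X, hX, hEE, fun j hj i => hcol j ?_ i⟩
      have := j.isLt; omega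
    case pos =>
    set jm : Fin n := ⟨m, hm⟩ with hjm
    set E : Matrix (Fin n) (Fin n) R := A * X with hE
    have hE0 : MatrixGradedHomogeneous 𝒜 γ 0 E := by
      have h := homMul 𝒜 hA hX
      rwa [add_neg_cancel] at h
    have h1E : MatrixGradedHomogeneous 𝒜 γ 0 (1 - E) := homSub 𝒜 (homOne 𝒜) hE0
    set C : Matrix (Fin n) (Fin n) R := (1 - E) * A with hC
    have hCh : MatrixGradedHomogeneous 𝒜 γ d C := by
      have h := homMul 𝒜 h1E hA
      rwa [zero_add] at h
    set v : Fin n → R := fun i => C i jm with hv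
    have hvmem : ∀ i, v i ∈ 𝒜 (-(γ i) + (d + γ jm)) := by
      intro i
      have h := hCh i jm
      rwa [add_assoc] at h
    obtain ⟨w, hw, hvt⟩ := colLemma 𝒜 hreg n γ (d + γ jm) v hvmem
    set M : Matrix (Fin n) (Fin n) R := Matrix.of fun k j => if k = jm then w j else 0
      with hM
    have hMh : MatrixGradedHomogeneous 𝒜 γ (-d) M := by
      intro k j
      simp only [hM, Matrix.of_apply]
      split
      · next hk =>
        subst hk
        have h := hw j
        rwa [neg_add_rev] at h
      · exact (𝒜 _).zero_mem
    set F : Matrix (Fin n) (Fin n) R := C * M with hF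
    have hFe : ∀ i j, F i j = v i * w j := by
      intro i j
      simp [hF, hM, Matrix.mul_apply]
      rfl
    have hEF : E * F = 0 := aux_ef A M hEE
    have hFF : F * F = F := by
      ext i j
      rw [Matrix.mul_apply]
      calc (∑ k, F i k * F k j) = ∑ k, v i * ((w k * v k) * w j) := by
            simp only [hFe, mul_assoc]
        _ = v i * ((∑ k, w k * v k) * w j) := by
            rw [← Finset.mul_sum, ← Finset.sum_mul]
        _ = (v i * (∑ k, w k * v k)) * w j := by rw [mul_assoc]
        _ = v i * w j := by rw [hvt i]
        _ = F i j := (hFe i j).symm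
    have hAX' : A * (X + (1 - X * A) * M * (1 - E)) = E + F * (1 - E) :=
      aux_ax A X M
    refine ⟨X + (1 - X * A) * M * (1 - E), ?_, ?_, ?_⟩
    · refine homAdd 𝒜 hX ?_
      have h1XA : MatrixGradedHomogeneous 𝒜 γ 0 (1 - X * A) := by
        refine homSub 𝒜 (homOne 𝒜) ?_
        have h := homMul 𝒜 hX hA
        rwa [neg_add_cancel] at h
      have h := homMul 𝒜 (homMul 𝒜 h1XA hMh) h1E
      rwa [zero_add, add_zero] at h
    · rw [hAX']
      exact aux_idem hEE hEF hFF
    · intro j hj i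
      rw [hAX', aux_split E F A, Matrix.add_apply]
      by_cases hjm' : (j : ℕ) < m
      · have hCzero : ∀ k, ((1 - E) * A) k j = 0 := by
          intro k
          rw [sub_mul, one_mul, Matrix.sub_apply, hcol j hjm' k, sub_self]
        have hz : (F * ((1 - E) * A)) i j = 0 := by
          rw [Matrix.mul_apply]
          simp only [hCzero, mul_zero, Finset.sum_const_zero]
        rw [hz, add_zero]
        exact hcol j hjm' i
      · have hjjm : j = jm := by
          apply Fin.ext
          show (j : ℕ) = m
          have := j.isLt
          omega
        subst hjjm
        have hCv : ∀ k, ((1 - E) * A) k jm = v k := fun k => rfl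
        have h2 : (F * ((1 - E) * A)) i jm = v i := by
          rw [Matrix.mul_apply]
          calc (∑ k, F i k * ((1 - E) * A) k jm) = ∑ k, v i * (w k * v k) := by
                simp only [hFe, hCv, mul_assoc]
            _ = v i * (∑ k, w k * v k) := (Finset.mul_sum _ _ _).symm
            _ = v i := hvt i
        have h3 : v i = A i jm - (E * A) i jm := by
          show ((1 - E) * A) i jm = _
          rw [sub_mul, one_mul, Matrix.sub_apply]
        rw [h2, h3]
        abel

end MGRaux

/-- If `R` is a graded regular `Γ`-graded ring, then every graded matrix ring `Mₙ(R)(γ)` is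
graded regular: every matrix `A` homogeneous of degree `d` admits a matrix `B` homogeneous
of degree `-d` with `A*B*A = A`. -/
theorem matrix_gradedRegular_of_gradedRegular
    {Γ R : Type*} [AddGroup Γ] [DecidableEq Γ] [Ring R]
    (𝒜 : Γ → AddSubgroup R) [GradedRing 𝒜]
    (hreg : GradedRegular 𝒜) {n : ℕ} (hn : 1 ≤ n) (γ : Fin n → Γ) :
    ∀ d : Γ, ∀ A : Matrix (Fin n) (Fin n) R, MatrixGradedHomogeneous 𝒜 γ d A →
      ∃ B : Matrix (Fin n) (Fin n) R,
        MatrixGradedHomogeneous 𝒜 γ (-d) B ∧ A * B * A = A := by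
  intro d A hA
  obtain ⟨X, hX, _, hcol⟩ := MGRaux.buildE 𝒜 hreg hA n
  refine ⟨X, hX, ?_⟩
  ext i j
  exact hcol j j.isLt i
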